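/- arXiv:1506.07544 — 2 statements merged into one kernel-verified Lean document; each statement's English description precedes it below -/
import Mathlib

section
/- A direct product ∏ᵢ Rᵢ of commutative rings is locally stable if and only if each Rᵢ is locally stable. -/
/-- A commutative ring has stable range 1. -/
def HasStableRange1 (R : Type*) [CommRing R] : Prop :=
  ∀ a b : R, Ideal.span {a} ⊔ Ideal.span {b} = ⊤ → ∃ y : R, IsUnit (a + b * y)

/-- An element `a` is stable if `R/aR` has stable range 1. -/
def IsStableElem {R : Type*} [CommRing R] (a : R) : Prop :=
  HasStableRange1 (R ⧸ Ideal.span {a})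

/-- A commutative ring is locally stable. -/
def LocallyStable (R : Type*) [CommRing R] : Prop :=
  ∀ a b : R, Ideal.span {a} ⊔ Ideal.span {b} = ⊤ →
    ∃ y : R, HasStableRange1 (R ⧸ Ideal.span {a + b * y})

/-- A clean ring: every element is the sum of an idempotent and a unit. -/
def IsCleanRing (R : Type*) [CommRing R] : Prop :=
  ∀ a : R, ∃ e u : R, IsIdempotentElem e ∧ IsUnit u ∧ a = e + u

/-- A ring has neat range 1. -/
def NeatRange1 (R : Type*) [CommRing R] : Prop :=
  ∀ a b : R, Ideal.span {a} ⊔ Ideal.span {b} = ⊤ →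
    ∃ y : R, IsCleanRing (R ⧸ Ideal.span {a + b * y})

/-- A ring has almost stable range 1: every proper homomorphic image has stable range 1. -/
def AlmostStableRange1 (R : Type*) [CommRing R] : Prop :=
  ∀ I : Ideal R, I ≠ ⊥ → HasStableRange1 (R ⧸ I)

/-- An elementary divisor ring: every rectangular matrix admits diagonal reduction. -/
def ElementaryDivisorRing (R : Type*) [CommRing R] : Prop :=
  ∀ (m n : ℕ) (A : Matrix (Fin m) (Fin n) R),
    ∃ (P : Matrix (Fin m) (Fin m) R) (Q : Matrix (Fin n) (Fin n) R),
      IsUnit P ∧ IsUnit Q ∧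
      (∀ (i : Fin m) (j : Fin n), (i : ℕ) ≠ (j : ℕ) → (P * A * Q) i j = 0) ∧
      (∀ (i i' : Fin m) (j j' : Fin n), (i : ℕ) = (j : ℕ) → (i' : ℕ) = (j' : ℕ) →
        (i' : ℕ) = (i : ℕ) + 1 → (P * A * Q) i j ∣ (P * A * Q) i' j')

/-- A ring is strongly completable. -/
def StronglyCompletable (R : Type*) [CommRing R] : Prop :=
  ∀ (n : ℕ) (hn : 0 < n) (a : Fin n → R) (d : R),
    (⨆ i, Ideal.span {a i}) = Ideal.span {d} →
    ∃ A : Matrix (Fin n) (Fin n) R, (∀ j, A ⟨0, hn⟩ j = a j) ∧ A.det = d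

/-!
Modulo a principal ideal `cR`, both the unimodularity of a pair and the unit condition of stable
range 1 become coprimality conditions with `c`, and coprimality in `∏ᵢ Rᵢ` holds exactly when it
holds in every coordinate. Hence `c` is a stable element of the product iff each `cᵢ` is stable in
`Rᵢ`, and the witnesses `y` of local stability can be chosen coordinatewise. An element or pair of
`Rᵢ` is embedded in the product by putting `1` (resp. `0`) in the other coordinates.
-/

section Quotient

variable {S : Type*} [CommRing S]

theorem Ideal.span_singleton_sup_span_singleton_eq_top_iff {a b : S} :
    Ideal.span {a} ⊔ Ideal.span {b} = ⊤ ↔ IsCoprime a b := by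
  rw [← Ideal.isCoprime_iff_sup_eq, Ideal.isCoprime_span_singleton_iff]

theorem Ideal.Quotient.isUnit_mk_span_singleton_iff {a c : S} :
    IsUnit (Ideal.Quotient.mk (Ideal.span {c}) a) ↔ IsCoprime a c := by
  simp only [isUnit_iff_exists_inv, Ideal.Quotient.mk_surjective.exists, ← map_mul, ← map_one
    (Ideal.Quotient.mk (Ideal.span {c})), Ideal.Quotient.eq, Ideal.mem_span_singleton']
  constructor
  · rintro ⟨u, w, hw⟩
    exact ⟨u, -w, by linear_combination -hw⟩
  · rintro ⟨u, w, h⟩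
    exact ⟨u, -w, by linear_combination -h⟩

theorem Ideal.Quotient.isCoprime_mk_span_singleton_iff {a b c : S} :
    IsCoprime (Ideal.Quotient.mk (Ideal.span {c}) a) (Ideal.Quotient.mk (Ideal.span {c}) b) ↔
      ∃ x y, IsCoprime (a * x + b * y) c := by
  constructor
  · rintro ⟨u, v, h⟩
    obtain ⟨u, rfl⟩ := Ideal.Quotient.mk_surjective u
    obtain ⟨v, rfl⟩ := Ideal.Quotient.mk_surjective v
    refine ⟨u, v, isUnit_mk_span_singleton_iff.1 ?_⟩
    rw [map_add, map_mul, map_mul, mul_comm, mul_comm (Ideal.Quotient.mk _ b), h]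
    exact isUnit_one
  · rintro ⟨x, y, h⟩
    obtain ⟨w, hw⟩ := isUnit_iff_exists_inv.1 (isUnit_mk_span_singleton_iff.2 h)
    refine ⟨Ideal.Quotient.mk _ x * w, Ideal.Quotient.mk _ y * w, ?_⟩
    simp only [map_add, map_mul] at hw
    linear_combination hw

theorem isStableElem_iff {c : S} :
    IsStableElem c ↔
      ∀ a b x y : S, IsCoprime (a * x + b * y) c → ∃ t, IsCoprime (a + b * t) c := by
  simp only [IsStableElem, HasStableRange1, Ideal.span_singleton_sup_span_singleton_eq_top_iff,
    Ideal.Quotient.mk_surjective.forall, Ideal.Quotient.mk_surjective.exists, ← map_mul,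
    ← map_add, Ideal.Quotient.isUnit_mk_span_singleton_iff,
    Ideal.Quotient.isCoprime_mk_span_singleton_iff, forall_exists_index]

theorem locallyStable_iff :
    LocallyStable S ↔ ∀ a b : S, IsCoprime a b → ∃ y, IsStableElem (a + b * y) := by
  simp only [LocallyStable, IsStableElem, Ideal.span_singleton_sup_span_singleton_eq_top_iff]

end Quotient

section Pi

variable {ι : Type*} {R : ι → Type*} [∀ i, CommRing (R i)]

theorem Pi.isCoprime_iff {a b : ∀ i, R i} : IsCoprime a b ↔ ∀ i, IsCoprime (a i) (b i) := by
  constructor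
  · rintro ⟨u, v, h⟩ i
    exact ⟨u i, v i, congrFun h i⟩
  · intro h
    choose u v huv using h
    exact ⟨u, v, funext huv⟩

theorem Pi.isCoprime_update_one_left_iff [DecidableEq ι] {i : ι} {a : R i} {b : ∀ j, R j} :
    IsCoprime (Function.update (1 : ∀ j, R j) i a) b ↔ IsCoprime a (b i) := by
  rw [Pi.isCoprime_iff]
  refine ⟨fun h ↦ by simpa using h i, fun h j ↦ ?_⟩
  rcases eq_or_ne j i with rfl | hj
  · simpa using h
  · simpa [hj] using isCoprime_one_left

theorem isStableElem_pi_iff {c : ∀ i, R i} : IsStableElem c ↔ ∀ i, IsStableElem (c i) := by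
  classical
  simp only [isStableElem_iff]
  constructor
  · intro h i a b x y hab
    have hlift : Function.update (1 : ∀ j, R j) i a * Function.update (1 : ∀ j, R j) i x +
        Function.update (0 : ∀ j, R j) i b * Function.update (0 : ∀ j, R j) i y =
          Function.update (1 : ∀ j, R j) i (a * x + b * y) := by
      rw [← Function.update_mul, ← Function.update_mul, ← Function.update_add]
      simp
    obtain ⟨t, ht⟩ := h (Function.update 1 i a) (Function.update 0 i b) _ _
      (hlift ▸ Pi.isCoprime_update_one_left_iff.2 hab)
    exact ⟨t i, by simpa using Pi.isCoprime_iff.1 ht i⟩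
  · intro h a b x y hab
    choose t ht using fun i ↦ h i (a i) (b i) (x i) (y i) (Pi.isCoprime_iff.1 hab i)
    exact ⟨t, Pi.isCoprime_iff.2 ht⟩

end Pi

theorem stmt5 {ι : Type*} (R : ι → Type*) [∀ i, CommRing (R i)] :
    LocallyStable (∀ i, R i) ↔ ∀ i, LocallyStable (R i) := by
  classical
  simp only [locallyStable_iff, isStableElem_pi_iff]
  constructor
  · intro h i a b hab
    obtain ⟨y, hy⟩ := h (Function.update 1 i a) (Function.update (0 : ∀ j, R j) i b)
      (Pi.isCoprime_update_one_left_iff.2 (by simpa using hab))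
    exact ⟨y i, by simpa using hy i⟩
  · intro h a b hab
    choose y hy using fun i ↦ h i (a i) (b i) (Pi.isCoprime_iff.1 hab i)
    exact ⟨y, fun i ↦ hy i⟩
end

section
/- The polynomial ring ℝ[X,Y,Z] is not locally stable. -/
/-
If `ℝ[X,Y,Z]` were locally stable, the comaximal pair `(X, X² + 1)` would give
`c = X + (X² + 1) y` with `ℝ[X,Y,Z]/(c)` of stable range 1. The specialisation
`X ↦ t, Y ↦ v, Z ↦ 0` followed by Nagata's substitution `t ↦ u + v^K` (`K` large) sends `c`
to a polynomial `G ∈ ℝ[u][v]` whose leading coefficient in `v` is a nonzero real constant; its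
degree is positive since `G(i, 0) = i` is not real. Stable range 1 passes to the quotient
`ℝ[u][v]/(G)`, which is free of some rank `N ≥ 1` over `ℝ[u]`. No such algebra has stable
range 1: take `ζ ∈ ℂ` with `ζ^N = i`, a root of `b = u^(2N) + 1`. If `u + b q` were a unit,
its norm down to `ℝ[u]` would be a unit, i.e. a real constant, congruent to `u^N` modulo `b`;
evaluating at `ζ` gives a real number equal to `i`.
-/

open Polynomial

theorem hasStableRange1_iff (R : Type*) [CommRing R] :
    HasStableRange1 R ↔ ∀ a b : R, IsCoprime a b → ∃ y, IsUnit (a + b * y) := by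
  simp only [HasStableRange1, Ideal.sup_eq_top_iff_isCoprime]

theorem HasStableRange1.of_surjective {R S : Type*} [CommRing R] [CommRing S] (f : R →+* S)
    (hf : Function.Surjective f) (h : HasStableRange1 R) : HasStableRange1 S := by
  rw [hasStableRange1_iff] at h ⊢
  rintro a b ⟨u, v, huv⟩
  obtain ⟨a, rfl⟩ := hf a
  obtain ⟨b, rfl⟩ := hf b
  obtain ⟨u, rfl⟩ := hf u
  obtain ⟨v, rfl⟩ := hf v
  -- `k ∈ ker f` repairs the lifted Bézout identity.
  set k := 1 - (u * a + v * b)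
  have hk : f k = 0 := by simp [k, ← huv]
  obtain ⟨z, hz⟩ := h a (v * b + k) ⟨u, 1, by ring⟩
  refine ⟨f v * f z, ?_⟩
  convert hz.map f using 1
  simp only [map_add, map_mul, hk]
  ring

theorem HasStableRange1.of_quotient_span_singleton {R S : Type*} [CommRing R] [CommRing S]
    (f : R →+* S) (hf : Function.Surjective f) {c : R} (hc : f c = 0)
    (h : HasStableRange1 (R ⧸ Ideal.span {c})) : HasStableRange1 S :=
  h.of_surjective (Ideal.Quotient.lift _ f fun a ha => by
      obtain ⟨t, rfl⟩ := Ideal.mem_span_singleton'.mp ha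
      rw [map_mul, hc, mul_zero])
    (Ideal.Quotient.lift_surjective_of_surjective _ _ hf)

theorem map_norm_algebraMap_add_algebraMap_mul {A S T : Type*} [CommRing A] [Nontrivial A]
    [CommRing S] [CommRing T] [Algebra A S] [Module.Free A S] [Module.Finite A S] (f : A →+* T)
    {c : A} (hc : f c = 0) (a : A) (q : S) :
    f (Algebra.norm A (algebraMap A S a + algebraMap A S c * q)) = f a ^ Module.finrank A S := by
  classical
  let b := Module.Free.chooseBasis A S
  have hscalar (x : A) : f.mapMatrix (Algebra.leftMulMatrix b (algebraMap A S x)) =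
      Matrix.scalar _ (f x) := by
    rw [AlgHom.commutes, Matrix.algebraMap_eq_diagonal]
    exact Matrix.diagonal_map (map_zero f)
  rw [Algebra.norm_eq_matrix_det b, RingHom.map_det, map_add, map_mul, map_add, map_mul,
    hscalar, hscalar, hc, map_zero, zero_mul, add_zero, Matrix.scalar_apply, Matrix.det_diagonal,
    Finset.prod_const, Finset.card_univ, Module.finrank_eq_card_chooseBasisIndex]

theorem not_hasStableRange1_of_finrank_ne_zero (S : Type*) [CommRing S] [Algebra ℝ[X] S]
    [Module.Free ℝ[X] S] [Module.Finite ℝ[X] S] (hS : Module.finrank ℝ[X] S ≠ 0) :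
    ¬ HasStableRange1 S := by
  set N := Module.finrank ℝ[X] S
  obtain ⟨ζ, hζ⟩ := IsAlgClosed.exists_pow_nat_eq Complex.I (Nat.pos_of_ne_zero hS)
  set b : ℝ[X] := X ^ (2 * N) + 1
  have hb : aeval ζ b = 0 := by simp [b, pow_mul', hζ]
  have hcop : IsCoprime (X : ℝ[X]) b :=
    ⟨-X ^ (2 * N - 1), 1, by rw [neg_mul, ← pow_succ, Nat.sub_add_cancel (by omega)]; ring⟩
  intro hsr
  obtain ⟨q, hq⟩ := (hasStableRange1_iff S).mp hsr _ _ (hcop.map (algebraMap ℝ[X] S))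
  obtain ⟨r, -, hr⟩ := Polynomial.isUnit_iff.mp (hq.map (Algebra.norm ℝ[X]))
  have key :=
    map_norm_algebraMap_add_algebraMap_mul (aeval ζ : ℝ[X] →ₐ[ℝ] ℂ).toRingHom hb X q
  rw [← hr, AlgHom.toRingHom_eq_coe, RingHom.coe_coe, aeval_C, aeval_X] at key
  have hrI : (r : ℂ) = Complex.I := key.trans hζ
  simpa using congrArg Complex.im hrI

theorem not_hasStableRange1_quotient_span_singleton {g : ℝ[X][X]} (hg : IsUnit g.leadingCoeff)
    (hpos : 0 < g.natDegree) : ¬ HasStableRange1 (ℝ[X][X] ⧸ Ideal.span {g}) := by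
  obtain ⟨u, hu⟩ := hg
  have hmonic : (C (↑u⁻¹ : ℝ[X]) * g).Monic :=
    monic_C_mul_of_mul_leadingCoeff_eq_one (by rw [← hu, Units.inv_mul])
  rw [← Ideal.span_singleton_mul_left_unit (isUnit_C.mpr u⁻¹.isUnit) g]
  have := hmonic.free_quotient
  have := hmonic.finite_quotient
  apply not_hasStableRange1_of_finrank_ne_zero
  rw [finrank_quotient_span_eq_natDegree' hmonic, natDegree_C_mul_of_isUnit u⁻¹.isUnit]
  exact hpos.ne'

section NagataSubstitution

variable {k : Type*} [CommRing k]

noncomputable def nagataSubst (K : ℕ) : k[X][X] →ₐ[k] k[X][X] :=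
  aevalTower (aeval (X ^ K + C X)) X

theorem nagataSubst_apply (K : ℕ) (H : k[X][X]) :
    nagataSubst K H = ∑ e ∈ H.support, aeval (X ^ K + C X) (H.coeff e) * X ^ e := by
  rw [nagataSubst, aevalTower, eval₂AlgHom_apply, eval₂_eq_sum, Polynomial.sum_def]
  rfl

theorem aeval_eq_comp_map (w : k[X][X]) (p : k[X]) : aeval w p = (p.map C).comp w := by
  rw [comp, eval₂_map, aeval_def]
  rfl

variable {K : ℕ} {H : k[X][X]}

theorem injOn_natDegree_coeff_mul_add (hK : H.natDegree < K) :
    Set.InjOn (fun e => (H.coeff e).natDegree * K + e) H.support := by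
  have hmod : ∀ e ∈ H.support, ((H.coeff e).natDegree * K + e) % K = e := fun e he => by
    rw [Nat.mul_add_mod', Nat.mod_eq_of_lt ((le_natDegree_of_mem_supp e he).trans_lt hK)]
  intro e he e' he' heq
  rw [← hmod e he, ← hmod e' he']
  exact congrArg (· % K) heq

variable [IsDomain k]

theorem natDegree_aeval_X_pow_add_C (p : k[X]) :
    (aeval (X ^ K + C X : k[X][X]) p).natDegree = p.natDegree * K := by
  rw [aeval_eq_comp_map, natDegree_comp, natDegree_X_pow_add_C,
    natDegree_map_eq_of_injective C_injective]

theorem leadingCoeff_aeval_X_pow_add_C (hK : K ≠ 0) (p : k[X]) :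
    (aeval (X ^ K + C X : k[X][X]) p).leadingCoeff = C p.leadingCoeff := by
  rw [aeval_eq_comp_map, leadingCoeff_comp (by rwa [natDegree_X_pow_add_C]),
    (monic_X_pow_add_C _ hK).leadingCoeff, one_pow, mul_one,
    leadingCoeff_map_of_injective C_injective]

theorem aeval_X_pow_add_C_ne_zero (hK : K ≠ 0) {p : k[X]} (hp : p ≠ 0) :
    aeval (X ^ K + C X : k[X][X]) p ≠ 0 := by
  rw [← leadingCoeff_ne_zero, leadingCoeff_aeval_X_pow_add_C hK, Ne, C_eq_zero,
    leadingCoeff_eq_zero]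
  exact hp

theorem natDegree_aeval_X_pow_add_C_mul_X_pow (hK : K ≠ 0) {p : k[X]} (hp : p ≠ 0) (e : ℕ) :
    (aeval (X ^ K + C X : k[X][X]) p * X ^ e).natDegree = p.natDegree * K + e := by
  rw [natDegree_mul_X_pow e (aeval_X_pow_add_C_ne_zero hK hp), natDegree_aeval_X_pow_add_C]

theorem natDegree_nagataSubst (hK : H.natDegree < K) :
    (nagataSubst K H).natDegree = H.support.sup fun e => (H.coeff e).natDegree * K + e := by
  have hdeg : ∀ e ∈ H.support,
      (aeval (X ^ K + C X) (H.coeff e) * X ^ e).natDegree = (H.coeff e).natDegree * K + e :=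
    fun e he => natDegree_aeval_X_pow_add_C_mul_X_pow (by omega) (mem_support_iff.mp he) e
  rw [nagataSubst_apply, natDegree_sum_eq_of_disjoint, Finset.sup_congr rfl hdeg]
  rintro e ⟨he, -⟩ e' ⟨he', -⟩ hne heq
  refine hne (injOn_natDegree_coeff_mul_add hK he he' ?_)
  simpa only [Function.comp_apply, hdeg e he, hdeg e' he'] using heq

theorem exists_leadingCoeff_nagataSubst_eq_C (hH : H ≠ 0) (hK : H.natDegree < K) :
    ∃ r : k, r ≠ 0 ∧ (nagataSubst K H).leadingCoeff = C r := by
  have hK0 : K ≠ 0 := by omega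
  obtain ⟨e₀, he₀, hsup⟩ := Finset.exists_mem_eq_sup H.support (nonempty_support_iff.mpr hH)
    fun e => (H.coeff e).natDegree * K + e
  have hc₀ := mem_support_iff.mp he₀
  refine ⟨(H.coeff e₀).leadingCoeff, leadingCoeff_ne_zero.mpr hc₀, ?_⟩
  rw [leadingCoeff, natDegree_nagataSubst hK, hsup, nagataSubst_apply, finsetSum_coeff,
    Finset.sum_eq_single e₀]
  · rw [← natDegree_aeval_X_pow_add_C_mul_X_pow hK0 hc₀, coeff_natDegree,
      leadingCoeff_mul_X_pow, leadingCoeff_aeval_X_pow_add_C hK0]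
  · intro e he hne
    apply coeff_eq_zero_of_natDegree_lt
    rw [natDegree_aeval_X_pow_add_C_mul_X_pow hK0 (mem_support_iff.mp he)]
    exact lt_of_le_of_ne (hsup ▸ Finset.le_sup (f := fun e => (H.coeff e).natDegree * K + e) he)
      fun h => hne (injOn_natDegree_coeff_mul_add hK he he₀ h)
  · exact fun h => (h he₀).elim

end NagataSubstitution

theorem nagataSubst_comp_aeval_surjective (k : Type*) [CommRing k] (K : ℕ) :
    Function.Surjective ((nagataSubst K).comp
      (MvPolynomial.aeval ![C X, X, 0] : MvPolynomial (Fin 3) k →ₐ[k] k[X][X])) := by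
  let ψ : k[X][X] →ₐ[k] MvPolynomial (Fin 3) k :=
    aevalTower (aeval (MvPolynomial.X 0 - MvPolynomial.X 1 ^ K)) (MvPolynomial.X 1)
  have hψ : ((nagataSubst K).comp (MvPolynomial.aeval ![C X, X, 0])).comp ψ = AlgHom.id k _ := by
    apply algHom_ext'
    · apply algHom_ext
      simp [ψ, nagataSubst]
    · simp [ψ, nagataSubst]
  exact fun p => ⟨ψ p, congrArg (· p) hψ⟩

theorem stmt19 : ¬ LocallyStable (MvPolynomial (Fin 3) ℝ) := by
  intro hLS
  obtain ⟨y, hy⟩ := hLS (MvPolynomial.X 0) (MvPolynomial.X 0 ^ 2 + 1)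
    ((Ideal.sup_eq_top_iff_isCoprime _ _).mpr ⟨-MvPolynomial.X 0, 1, by ring⟩)
  set c := MvPolynomial.X 0 + (MvPolynomial.X 0 ^ 2 + 1) * y
  set φ : MvPolynomial (Fin 3) ℝ →ₐ[ℝ] ℝ[X][X] := MvPolynomial.aeval ![C X, X, 0]
  set K := (φ c).natDegree + 1
  set G := nagataSubst K (φ c)
  -- `(u, v) ↦ (i, 0)` sends `X 0` to `i`, hence `c` to `i`: so `G` is not a real constant.
  have hG : aevalTower (aeval Complex.I) 0 G = Complex.I := by
    simp [G, c, φ, nagataSubst, K]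
  have hφc : φ c ≠ 0 := fun h => Complex.I_ne_zero (by simpa [G, h] using hG.symm)
  obtain ⟨r, hr, hlc⟩ : ∃ r : ℝ, r ≠ 0 ∧ G.leadingCoeff = C r :=
    exists_leadingCoeff_nagataSubst_eq_C hφc (Nat.lt_add_one _)
  have hpos : 0 < G.natDegree := by
    by_contra! h0
    obtain ⟨x, hx⟩ := natDegree_eq_zero.mp (Nat.le_zero.mp h0)
    rw [← hx, leadingCoeff_C] at hlc
    rw [← hx, hlc, aevalTower_C, aeval_C] at hG
    simpa using congrArg Complex.im hG
  refine not_hasStableRange1_quotient_span_singleton (hlc ▸ isUnit_C.mpr hr.isUnit) hpos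
    (hy.of_quotient_span_singleton ((Ideal.Quotient.mk _).comp ((nagataSubst K).comp φ).toRingHom)
      (Ideal.Quotient.mk_surjective.comp (nagataSubst_comp_aeval_surjective ℝ K))
      (Ideal.Quotient.eq_zero_iff_mem.mpr (Ideal.mem_span_singleton_self _)))
end
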